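/- For any matrix X with compact SVD X = U S Vᵀ (U, V having orthonormal columns and S diagonal positive), and any matrix Y, the inequality ‖Y‖_* ≥ ‖X‖_* + ⟨UVᵀ, Y − X⟩ holds, where ‖·‖_* is the nuclear norm and ⟨·,·⟩ the Frobenius inner product; i.e., UVᵀ is a subgradient of the nuclear norm at X. -/

import Mathlib

/-! `UVᵀ` is a contraction, so `⟨UVᵀ, Y⟩ ≤ ‖Y‖_*` by the duality between the operator and
nuclear norms, while `⟨UVᵀ, X⟩ = ∑ σ ≥ ‖X‖_*`. Both halves of the duality come from the polar
decomposition `Y = M |Y|`, where `M` is a contraction with `tr (Mᵀ Y) = tr |Y| = ‖Y‖_*`: the trace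
of `Aᵀ (U diag(s) Vᵀ)` is `∑ s_j (Vᵀ Aᵀ U)_jj`, and a diagonal entry is bounded by the operator
norm. -/

open scoped BigOperators
open Matrix

/-- Nuclear norm of a real matrix: the sum of its singular values, i.e. the sum
of the square roots of the eigenvalues of `Aᵀ A`. -/
noncomputable def nuclearNorm {n m : ℕ} (A : Matrix (Fin n) (Fin m) ℝ) : ℝ :=
  ∑ i, Real.sqrt ((Matrix.isHermitian_conjTranspose_mul_self A).eigenvalues i)

open scoped Matrix.Norms.L2Operator

namespace Matrix

variable {m n k : Type*} [Fintype m] [Fintype n] [Fintype k]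

lemma apply_le_l2_opNorm [DecidableEq n] (B : Matrix m n ℝ) (i : m) (j : n) : B i j ≤ ‖B‖ := by
  have hcol := B.l2_opNorm_mulVec (EuclideanSpace.single j 1)
  have hentry := PiLp.norm_apply_le
    ((EuclideanSpace.equiv m ℝ).symm (B *ᵥ EuclideanSpace.single j (1 : ℝ))) i
  simp only [PiLp.ofLp_single, mulVec_single, MulOpposite.op_one, one_smul,
    PiLp.continuousLinearEquiv_symm_apply, PiLp.norm_single, norm_one, mul_one, col_apply,
    Real.norm_eq_abs] at hcol hentry
  exact (le_abs_self _).trans (hentry.trans hcol)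

lemma l2_opNorm_transpose [DecidableEq m] [DecidableEq n] (A : Matrix m n ℝ) : ‖Aᵀ‖ = ‖A‖ := by
  rw [← conjTranspose_eq_transpose_of_trivial, l2_opNorm_conjTranspose]

lemma l2_opNorm_mul_mul_le {l : Type*} [Fintype l] [DecidableEq n] [DecidableEq k]
    [DecidableEq l] (A : Matrix m n ℝ) (B : Matrix n k ℝ) (C : Matrix k l ℝ) :
    ‖A * B * C‖ ≤ ‖A‖ * ‖B‖ * ‖C‖ :=
  (l2_opNorm_mul _ _).trans (mul_le_mul_of_nonneg_right (l2_opNorm_mul _ _) (norm_nonneg _))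

lemma l2_opNorm_diagonal_le_one [DecidableEq n] {p : n → ℝ} (hp : ∀ i, |p i| ≤ 1) :
    ‖diagonal p‖ ≤ 1 := by
  rw [l2_opNorm_diagonal]
  exact (pi_norm_le_iff_of_nonneg zero_le_one).mpr hp

lemma l2_opNorm_le_one_of_transpose_mul_self [DecidableEq n] {M : Matrix m n ℝ}
    (hM : ‖Mᵀ * M‖ ≤ 1) : ‖M‖ ≤ 1 := by
  rw [← conjTranspose_eq_transpose_of_trivial, l2_opNorm_conjTranspose_mul_self] at hM
  nlinarith [norm_nonneg M]

lemma l2_opNorm_le_one_of_transpose_mul_self_eq_one [DecidableEq n] {U : Matrix m n ℝ}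
    (hU : Uᵀ * U = 1) : ‖U‖ ≤ 1 := by
  refine l2_opNorm_le_one_of_transpose_mul_self ?_
  rw [hU, ← diagonal_one]
  exact l2_opNorm_diagonal_le_one fun _ => by simp

lemma l2_opNorm_mul_diagonal_mul_transpose_le_one [DecidableEq m] [DecidableEq k]
    {Q : Matrix m k ℝ} {p : k → ℝ} (hQ : Qᵀ * Q = 1) (hp : ∀ i, |p i| ≤ 1) :
    ‖Q * diagonal p * Qᵀ‖ ≤ 1 := by
  have hQn := l2_opNorm_le_one_of_transpose_mul_self_eq_one hQ
  calc ‖Q * diagonal p * Qᵀ‖ ≤ ‖Q‖ * ‖diagonal p‖ * ‖Q‖ := by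
        simpa only [l2_opNorm_transpose] using l2_opNorm_mul_mul_le Q (diagonal p) Qᵀ
    _ ≤ 1 * 1 * 1 := by gcongr; exact l2_opNorm_diagonal_le_one hp
    _ = 1 := by ring

lemma trace_transpose_mul_mul_diagonal_mul_transpose_le [DecidableEq m] [DecidableEq n]
    [DecidableEq k] (A : Matrix m n ℝ) {U : Matrix m k ℝ} {V : Matrix n k ℝ} {s : k → ℝ}
    (hU : ‖U‖ ≤ 1) (hV : ‖V‖ ≤ 1) (hs : ∀ j, 0 ≤ s j) :
    trace (Aᵀ * (U * diagonal s * Vᵀ)) ≤ ‖A‖ * ∑ j, s j := by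
  have htrace : trace (Aᵀ * (U * diagonal s * Vᵀ)) = ∑ j, (Vᵀ * Aᵀ * U) j j * s j := by
    rw [← Matrix.mul_assoc, ← Matrix.mul_assoc, trace_mul_comm, ← Matrix.mul_assoc,
      ← Matrix.mul_assoc]
    simp [trace, mul_diagonal]
  have hnorm : ‖Vᵀ * Aᵀ * U‖ ≤ ‖A‖ := calc
    ‖Vᵀ * Aᵀ * U‖ ≤ ‖V‖ * ‖A‖ * ‖U‖ := by
      simpa only [l2_opNorm_transpose] using l2_opNorm_mul_mul_le Vᵀ Aᵀ U
    _ ≤ 1 * ‖A‖ * 1 := by gcongr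
    _ = ‖A‖ := by ring
  rw [htrace, Finset.mul_sum]
  exact Finset.sum_le_sum fun j _ =>
    mul_le_mul_of_nonneg_right ((apply_le_l2_opNorm _ j j).trans hnorm) (hs j)

/-- `|Y| = Q diag(s) Qᵀ` and `M = Y Q diag(s⁻¹) Qᵀ`, where `0⁻¹ = 0` makes `M` vanish on the
kernel of `Y`. -/
lemma exists_polar_decomposition [DecidableEq m] [DecidableEq k] (Y : Matrix n m ℝ)
    {Q : Matrix m k ℝ} {s : k → ℝ} (hQ : Qᵀ * Q = 1)
    (hY : Yᵀ * Y = Q * diagonal (fun i => s i ^ 2) * Qᵀ) :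
    ∃ M : Matrix n m ℝ, ‖M‖ ≤ 1 ∧ Y = M * Q * diagonal s * Qᵀ ∧ trace (Mᵀ * Y) = ∑ i, s i := by
  have hQ_cancel : ∀ X : Matrix k m ℝ, Qᵀ * (Q * X) = X := fun X => by
    rw [← Matrix.mul_assoc, hQ, Matrix.one_mul]
  have hdiag : ∀ (a b : k → ℝ) (X : Matrix k m ℝ),
      diagonal a * (diagonal b * X) = diagonal (fun i => a i * b i) * X := fun a b X => by
    rw [← Matrix.mul_assoc, diagonal_mul_diagonal]
  set M := Y * Q * diagonal (fun i => (s i)⁻¹) * Qᵀ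
  refine ⟨M, ?contraction, ?decomposition, ?trace⟩
  case contraction =>
    have hMM : Mᵀ * M = Q * diagonal (fun i => ((s i)⁻¹ * s i) ^ 2) * Qᵀ := by
      have hexpand : Mᵀ * M = Q * diagonal (fun i => (s i)⁻¹) * Qᵀ * (Yᵀ * Y) * Q *
          diagonal (fun i => (s i)⁻¹) * Qᵀ := by
        simp [M, transpose_mul, Matrix.mul_assoc]
      rw [hexpand, hY]
      simp only [Matrix.mul_assoc, hQ_cancel, hdiag]
      congr 3; funext i; ring
    refine l2_opNorm_le_one_of_transpose_mul_self ?_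
    rw [hMM]
    refine l2_opNorm_mul_diagonal_mul_transpose_le_one hQ fun i => ?_
    by_cases h : s i = 0 <;> simp [h]
  case decomposition =>
    set P := Q * diagonal (fun i => (s i)⁻¹ * s i) * Qᵀ
    have hMQ : M * Q * diagonal s * Qᵀ = Y * P := by
      simp only [M, P, Matrix.mul_assoc, hQ_cancel, hdiag]
    have hker : Yᵀ * Y * (1 - P) = 0 := by
      rw [Matrix.mul_sub, Matrix.mul_one, hY]
      simp only [P, Matrix.mul_assoc, hQ_cancel, hdiag]
      rw [sub_eq_zero]
      congr 3; funext i
      by_cases h : s i = 0 <;> simp [h]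
    have hZ : (Y * (1 - P))ᵀ * (Y * (1 - P)) = 0 := by
      rw [transpose_mul, Matrix.mul_assoc, ← Matrix.mul_assoc Yᵀ, hker, Matrix.mul_zero]
    rw [← conjTranspose_eq_transpose_of_trivial, conjTranspose_mul_self_eq_zero,
      Matrix.mul_sub, Matrix.mul_one, sub_eq_zero] at hZ
    rw [hMQ, ← hZ]
  case trace =>
    have hMY : Mᵀ * Y = Q * diagonal (fun i => (s i)⁻¹) * Qᵀ * (Yᵀ * Y) := by
      simp [M, transpose_mul, Matrix.mul_assoc]
    rw [hMY, hY]
    simp only [Matrix.mul_assoc, hQ_cancel, hdiag]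
    rw [trace_mul_comm, Matrix.mul_assoc, hQ, Matrix.mul_one, trace_diagonal]
    congr 1; funext i
    by_cases h : s i = 0 <;> field_simp [h]

lemma trace_transpose_mul_mul_diagonal_mul_transpose_self [DecidableEq k] {U : Matrix m k ℝ}
    {V : Matrix n k ℝ} (hU : Uᵀ * U = 1) (hV : Vᵀ * V = 1) (s : k → ℝ) :
    trace ((U * Vᵀ)ᵀ * (U * diagonal s * Vᵀ)) = ∑ i, s i := by
  have hcollapse : (U * Vᵀ)ᵀ * (U * diagonal s * Vᵀ) = V * (Uᵀ * U) * diagonal s * Vᵀ := by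
    simp only [transpose_mul, transpose_transpose, Matrix.mul_assoc]
  rw [hcollapse, hU, Matrix.mul_one, trace_mul_cycle, hV, Matrix.one_mul, trace_diagonal]

end Matrix

lemma nuclearNorm_nonneg {n m : ℕ} (Y : Matrix (Fin n) (Fin m) ℝ) : 0 ≤ nuclearNorm Y :=
  Finset.sum_nonneg fun _ _ => Real.sqrt_nonneg _

lemma exists_transpose_mul_self_eq_nuclearNorm {n m : ℕ} (Y : Matrix (Fin n) (Fin m) ℝ) :
    ∃ (Q : Matrix (Fin m) (Fin m) ℝ) (s : Fin m → ℝ), Qᵀ * Q = 1 ∧ (∀ i, 0 ≤ s i) ∧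
      ∑ i, s i = nuclearNorm Y ∧ Yᵀ * Y = Q * diagonal (fun i => s i ^ 2) * Qᵀ := by
  have hB := isHermitian_conjTranspose_mul_self Y
  have hμ := (posSemidef_conjTranspose_mul_self Y).eigenvalues_nonneg
  refine ⟨hB.eigenvectorUnitary, fun i => √(hB.eigenvalues i), ?_, fun i => Real.sqrt_nonneg _,
    rfl, ?_⟩
  · simpa [star_eq_conjTranspose] using (mem_unitaryGroup_iff').mp hB.eigenvectorUnitary.2
  · have hspec := hB.spectral_theorem
    simp only [conjTranspose_eq_transpose_of_trivial] at hspec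
    rw [hspec]
    simp only [RCLike.ofReal_real_eq_id, CompTriple.comp_eq, Unitary.conjStarAlgAut_apply,
      star_eq_conjTranspose, conjTranspose_eq_transpose_of_trivial]
    congr 3
    funext i
    exact (Real.sq_sqrt (hμ i)).symm

lemma trace_transpose_mul_le_l2_opNorm_mul_nuclearNorm {n m : ℕ}
    (A Y : Matrix (Fin n) (Fin m) ℝ) : trace (Aᵀ * Y) ≤ ‖A‖ * nuclearNorm Y := by
  obtain ⟨Q, s, hQ, hs, hsum, hY⟩ := exists_transpose_mul_self_eq_nuclearNorm Y
  obtain ⟨M, hM, hpolar, -⟩ := exists_polar_decomposition Y hQ hY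
  have hQn := l2_opNorm_le_one_of_transpose_mul_self_eq_one hQ
  have hMQ : ‖M * Q‖ ≤ 1 := (l2_opNorm_mul M Q).trans (mul_le_one₀ hM (norm_nonneg _) hQn)
  rw [← hsum, hpolar]
  exact trace_transpose_mul_mul_diagonal_mul_transpose_le A hMQ hQn hs

lemma exists_l2_opNorm_le_one_trace_transpose_mul_eq_nuclearNorm {n m : ℕ}
    (Y : Matrix (Fin n) (Fin m) ℝ) :
    ∃ M : Matrix (Fin n) (Fin m) ℝ, ‖M‖ ≤ 1 ∧ trace (Mᵀ * Y) = nuclearNorm Y := by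
  obtain ⟨Q, s, hQ, -, hsum, hY⟩ := exists_transpose_mul_self_eq_nuclearNorm Y
  obtain ⟨M, hM, -, htrace⟩ := exists_polar_decomposition Y hQ hY
  exact ⟨M, hM, htrace.trans hsum⟩

lemma nuclearNorm_mul_diagonal_mul_transpose_le {n m r : ℕ} {U : Matrix (Fin n) (Fin r) ℝ}
    {V : Matrix (Fin m) (Fin r) ℝ} {σ : Fin r → ℝ} (hU : ‖U‖ ≤ 1) (hV : ‖V‖ ≤ 1)
    (hσ : ∀ i, 0 ≤ σ i) : nuclearNorm (U * diagonal σ * Vᵀ) ≤ ∑ i, σ i := by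
  obtain ⟨M, hM, htrace⟩ :=
    exists_l2_opNorm_le_one_trace_transpose_mul_eq_nuclearNorm (U * diagonal σ * Vᵀ)
  rw [← htrace]
  exact (trace_transpose_mul_mul_diagonal_mul_transpose_le M hU hV hσ).trans
    (mul_le_of_le_one_left (Finset.sum_nonneg fun i _ => hσ i) hM)

/-- `UVᵀ` is a subgradient of the nuclear norm at `X = U S Vᵀ`:
for every matrix `Y`, `‖Y‖_* ≥ ‖X‖_* + ⟨UVᵀ, Y − X⟩`. -/
theorem nuclearNorm_subgradient {n m r : ℕ}
    (X Y : Matrix (Fin n) (Fin m) ℝ)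
    (U : Matrix (Fin n) (Fin r) ℝ) (V : Matrix (Fin m) (Fin r) ℝ)
    (S : Matrix (Fin r) (Fin r) ℝ) (σ : Fin r → ℝ)
    (hU : Uᵀ * U = 1) (hV : Vᵀ * V = 1)
    (hS : S = Matrix.diagonal σ) (hσ : ∀ i, 0 < σ i)
    (hX : X = U * S * Vᵀ) :
    nuclearNorm X + Matrix.trace ((U * Vᵀ)ᵀ * (Y - X)) ≤ nuclearNorm Y := by
  subst hS hX
  have hUn := l2_opNorm_le_one_of_transpose_mul_self_eq_one hU
  have hVn := l2_opNorm_le_one_of_transpose_mul_self_eq_one hV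
  have hUVn : ‖U * Vᵀ‖ ≤ 1 :=
    (l2_opNorm_mul U Vᵀ).trans (mul_le_one₀ hUn (norm_nonneg _) (l2_opNorm_transpose V ▸ hVn))
  have hnuc_X : nuclearNorm (U * diagonal σ * Vᵀ) ≤ ∑ i, σ i :=
    nuclearNorm_mul_diagonal_mul_transpose_le hUn hVn fun i => (hσ i).le
  have hdual_Y : trace ((U * Vᵀ)ᵀ * Y) ≤ nuclearNorm Y :=
    (trace_transpose_mul_le_l2_opNorm_mul_nuclearNorm _ Y).trans
      (mul_le_of_le_one_left (nuclearNorm_nonneg Y) hUVn)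
  rw [Matrix.mul_sub, trace_sub, trace_transpose_mul_mul_diagonal_mul_transpose_self hU hV]
  linarith
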